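/- arXiv:2012.09061 — 2 statements merged into one kernel-verified Lean document; each statement's English description precedes it below -/
import Mathlib

section
/- For any n ≥ 2, any subsets S ⊆ Q ⊆ Fin n, and any real α: GZZ_Q(α) · X_S · GZZ_Q(α) · X_S = GZZ_{Q∖S}(2α) · GZZ_S(2α). (Proposition 2: applying a pair of GZZ(α) gates on a set Q with NOT gates in between on the qubits S equals applying a GZZ(2α) gate on each of the sets Q∖S and S.) -/
open Matrix

noncomputable section

/-- `2^n × 2^n` matrices, indexed by computational basis states `x : Fin n → Bool`. -/
abbrev NQMatrix (n : ℕ) := Matrix (Fin n → Bool) (Fin n → Bool) ℂ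

/-- A bit counted as 0 or 1. -/
def bitv (b : Bool) : ℕ := if b then 1 else 0

/-- A bit as an index into a 2×2 matrix. -/
def bIdx (b : Bool) : Fin 2 := if b then 1 else 0

/-- The n-fold Kronecker product of 2×2 matrices. -/
def kron {n : ℕ} (f : Fin n → Matrix (Fin 2) (Fin 2) ℂ) : NQMatrix n :=
  Matrix.of fun x y => ∏ i, f i (bIdx (x i)) (bIdx (y i))

def PX : Matrix (Fin 2) (Fin 2) ℂ := !![0, 1; 1, 0]
def PY : Matrix (Fin 2) (Fin 2) ℂ := !![0, -Complex.I; Complex.I, 0]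
def PZ : Matrix (Fin 2) (Fin 2) ℂ := !![1, 0; 0, -1]

/-- The Hadamard matrix. -/
def HMat : Matrix (Fin 2) (Fin 2) ℂ := ((Real.sqrt 2)⁻¹ : ℝ) • !![1, 1; 1, -1]

/-- The 2×2 matrix `A` applied at position `i`, identity elsewhere. -/
def gate1 {n : ℕ} (A : Matrix (Fin 2) (Fin 2) ℂ) (i : Fin n) : NQMatrix n :=
  kron (fun j => if j = i then A else 1)

lemma diag_comm {m : Type*} [Fintype m] [DecidableEq m] (d e : m → ℂ) :
    Commute (Matrix.diagonal d) (Matrix.diagonal e) := by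
  unfold Commute SemiconjBy
  rw [Matrix.diagonal_mul_diagonal, Matrix.diagonal_mul_diagonal]
  exact congrArg Matrix.diagonal (funext fun i => mul_comm (d i) (e i))

/-- The two-qubit ZZ interaction gate `ZZ_{ij}(α)`. -/
def ZZgate {n : ℕ} (i j : Fin n) (α : ℝ) : NQMatrix n :=
  Matrix.diagonal fun x =>
    Complex.exp (-Complex.I * (α / 2) * (-1 : ℂ) ^ (bitv (x i) + bitv (x j)))

/-- The global ZZ gate on a subset `S`: the product of `ZZgate i j α` over all
unordered pairs `{i,j} ⊆ S` with `i ≠ j`. -/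
def GZZ {n : ℕ} (S : Finset (Fin n)) (α : ℝ) : NQMatrix n :=
  ((S ×ˢ S).filter fun p => p.1 < p.2).noncommProd (fun p => ZZgate p.1 p.2 α)
    (fun _ _ _ _ _ => diag_comm _ _)

/-- The two-qubit CZ gate. -/
def CZgate {n : ℕ} (i j : Fin n) : NQMatrix n :=
  Matrix.diagonal fun x => (-1 : ℂ) ^ (bitv (x i) * bitv (x j))

/-- The global CZ gate on a subset `S`: the product of `CZgate i j` over all
unordered pairs `{i,j} ⊆ S` with `i ≠ j`. -/
def GCZ {n : ℕ} (S : Finset (Fin n)) : NQMatrix n :=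
  ((S ×ˢ S).filter fun p => p.1 < p.2).noncommProd (fun p => CZgate p.1 p.2)
    (fun _ _ _ _ _ => diag_comm _ _)

/-- Flip the bits at positions in `S`. -/
def flipS {n : ℕ} (S : Finset (Fin n)) (x : Fin n → Bool) : Fin n → Bool :=
  fun i => if i ∈ S then !(x i) else x i

/-- The layer of NOT gates on the qubits in `S`, as a permutation matrix. -/
def XS {n : ℕ} (S : Finset (Fin n)) : NQMatrix n :=
  Matrix.of fun x y => if y = flipS S x then 1 else 0

/-- The CNOT gate with control `c` and target `t`, as a permutation matrix. -/
def CNOT {n : ℕ} (c t : Fin n) : NQMatrix n :=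
  Matrix.of fun x y => if y = Function.update x t (xor (x t) (x c)) then 1 else 0

/-- The targeted global Mølmer–Sørensen gate on the subset `S`:
`GMS_S(α) = exp(-i·(α/4)·Σ_{i ≠ j ∈ S} X_i·X_j)`, the sum ranging over ordered
pairs of distinct elements of `S`. -/
def GMS {n : ℕ} (S : Finset (Fin n)) (α : ℝ) : NQMatrix n :=
  NormedSpace.exp ((-Complex.I * (α / 4)) •
    ∑ p ∈ (S ×ˢ S).filter (fun p => p.1 ≠ p.2), gate1 PX p.1 * gate1 PX p.2)

/-!
All gates involved are diagonal, and conjugating a diagonal matrix by `X_S` permutes its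
diagonal by the bit flip on `S`. Flipping both or neither qubit of a pair `{i, j}` leaves
the phase of `ZZ_{ij}(α)` unchanged, so the two factors combine to `ZZ_{ij}(2α)`; flipping
exactly one inverts it, so the two factors cancel. The surviving pairs are those inside
`Q \ S` and those inside `S`.
-/

open Finset

lemma noncommProd_diagonal {m ι R : Type*} [Fintype m] [DecidableEq m] [CommSemiring R]
    (s : Finset ι) (d : ι → m → R) (comm) :
    s.noncommProd (fun i => diagonal (d i)) comm = diagonal fun x => ∏ i ∈ s, d i x := by
  rw [← Finset.prod_fn, ← noncommProd_eq_prod]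
  exact (map_noncommProd s d _ (diagonalRingHom m R)).symm

def ltPairs {ι : Type*} [LinearOrder ι] (T : Finset ι) : Finset (ι × ι) :=
  (T ×ˢ T).filter fun p => p.1 < p.2

lemma ltPairs_filter_mem_iff_mem {ι : Type*} [LinearOrder ι] {Q S : Finset ι} (hSQ : S ⊆ Q) :
    (ltPairs Q).filter (fun p => p.1 ∈ S ↔ p.2 ∈ S) = ltPairs (Q \ S) ∪ ltPairs S := by
  ext ⟨i, j⟩
  have := @hSQ i
  have := @hSQ j
  simp only [ltPairs, mem_filter, mem_product, mem_sdiff, mem_union]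
  tauto

lemma disjoint_ltPairs_sdiff {ι : Type*} [LinearOrder ι] (Q S : Finset ι) :
    Disjoint (ltPairs (Q \ S)) (ltPairs S) :=
  disjoint_filter_filter (disjoint_product.mpr (Or.inl sdiff_disjoint))

/-- The diagonal entry of `ZZ_{ij}(α)` at a basis state with bits `a` at `i` and `b` at `j`. -/
def zzPhase (α : ℝ) (a b : Bool) : ℂ :=
  Complex.exp (-Complex.I * (α / 2) * (-1 : ℂ) ^ (bitv a + bitv b))

lemma GZZ_eq_diagonal {n : ℕ} (T : Finset (Fin n)) (α : ℝ) :
    GZZ T α = diagonal fun x => ∏ p ∈ ltPairs T, zzPhase α (x p.1) (x p.2) :=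
  noncommProd_diagonal _ _ _

lemma zzPhase_not_not (α : ℝ) (a b : Bool) : zzPhase α (!a) (!b) = zzPhase α a b := by
  cases a <;> cases b <;> norm_num [zzPhase, bitv]

lemma zzPhase_mul_self (α : ℝ) (a b : Bool) :
    zzPhase α a b * zzPhase α a b = zzPhase (2 * α) a b := by
  rw [zzPhase, zzPhase, ← Complex.exp_add]
  push_cast
  ring_nf

lemma zzPhase_mul_zzPhase_not_left (α : ℝ) (a b : Bool) :
    zzPhase α a b * zzPhase α (!a) b = 1 := by
  rw [zzPhase, zzPhase, ← Complex.exp_add, Complex.exp_eq_one_iff]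
  exact ⟨0, by cases a <;> cases b <;> norm_num [bitv]⟩

lemma zzPhase_mul_zzPhase_not_right (α : ℝ) (a b : Bool) :
    zzPhase α a b * zzPhase α a (!b) = 1 := by
  rw [zzPhase, zzPhase, ← Complex.exp_add, Complex.exp_eq_one_iff]
  exact ⟨0, by cases a <;> cases b <;> norm_num [bitv]⟩

lemma zzPhase_mul_zzPhase_flipS {n : ℕ} (α : ℝ) (S : Finset (Fin n)) (x : Fin n → Bool)
    (i j : Fin n) :
    zzPhase α (x i) (x j) * zzPhase α (flipS S x i) (flipS S x j)
      = if (i ∈ S ↔ j ∈ S) then zzPhase (2 * α) (x i) (x j) else 1 := by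
  by_cases hi : i ∈ S <;> by_cases hj : j ∈ S <;>
    simp [flipS, hi, hj, zzPhase_not_not, zzPhase_mul_self, zzPhase_mul_zzPhase_not_left,
      zzPhase_mul_zzPhase_not_right]

lemma flipS_involutive {n : ℕ} (S : Finset (Fin n)) : Function.Involutive (flipS S) := by
  intro x
  funext i
  by_cases hi : i ∈ S <;> simp [flipS, hi]

lemma XS_eq_toMatrix {n : ℕ} (S : Finset (Fin n)) :
    XS S = ((flipS_involutive S).toPerm _).toPEquiv.toMatrix := by
  ext x y
  simp [XS, PEquiv.toMatrix_apply, eq_comm]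

lemma XS_mul_diagonal_mul_XS {n : ℕ} (S : Finset (Fin n)) (d : (Fin n → Bool) → ℂ) :
    XS S * diagonal d * XS S = diagonal (d ∘ flipS S) := by
  rw [XS_eq_toMatrix, PEquiv.toMatrix_toPEquiv_mul, PEquiv.mul_toMatrix_toPEquiv,
    Function.Involutive.toPerm_symm, submatrix_submatrix, Function.comp_id,
    Function.id_comp, submatrix_diagonal_equiv, Function.Involutive.coe_toPerm]

theorem gzz_with_nots_splits_general (n : ℕ) (Q S : Finset (Fin n))
    (hSQ : S ⊆ Q) (α : ℝ) :
    GZZ Q α * XS S * GZZ Q α * XS S = GZZ (Q \ S) (2 * α) * GZZ S (2 * α) := by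
  rw [mul_assoc, mul_assoc, ← mul_assoc (XS S), GZZ_eq_diagonal Q, XS_mul_diagonal_mul_XS,
    GZZ_eq_diagonal, GZZ_eq_diagonal, diagonal_mul_diagonal, diagonal_mul_diagonal]
  congr 1
  funext x
  rw [Function.comp_apply, ← prod_mul_distrib]
  simp only [zzPhase_mul_zzPhase_flipS]
  rw [← prod_filter, ltPairs_filter_mem_iff_mem hSQ, prod_union (disjoint_ltPairs_sdiff Q S)]

/-- Proposition 2: applying a pair of `GZZ(α)` gates on a set `Q` with NOT gates
in between them on the qubits `S ⊆ Q` is equal to applying a `GZZ(2α)` gate on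
each of the sets `Q \ S` and `S`. -/
theorem gzz_with_nots_splits (n : ℕ) (hn : 2 ≤ n) (Q S : Finset (Fin n))
    (hSQ : S ⊆ Q) (α : ℝ) :
    GZZ Q α * XS S * GZZ Q α * XS S = GZZ (Q \ S) (2 * α) * GZZ S (2 * α) :=
  gzz_with_nots_splits_general n Q S hSQ α
end
end

section
/- Let n ≥ 1, S ⊆ Fin n with t ∈ S. Then H_t · GCZ_S · H_t = (∏_{unordered pairs {i,j} ⊆ S∖{t}, i≠j} CZ_{ij}) · (∏_{i ∈ S∖{t}} CNOT_{i,t}), where H_t is the n-fold Kronecker product with the Hadamard matrix at position t and identity elsewhere. (Conjugating a global CZ gate on S by a Hadamard on one qubit t produces a fan-in of CNOTs into t together with residual CZ gates among the other qubits of S.) -/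
/-!
Since `t ∈ S`, the phase `(-1)^{#pairs in S with both bits set}` of `GCZ S` splits as the phase of
`GCZ (S \ {t})` times `(-1)^{x_t · p(x)}`, where `p(x)` is the parity of the bits of `x` on
`S \ {t}`. The first factor does not involve qubit `t`, so it commutes with `H_t`; the second is a
`Z` on qubit `t` controlled by `p`, and `H Z H = X` turns it into the gate `x ↦ x ⊕ p(x)·e_t`.
That gate is the product of the `CNOT_{i,t}`, `i ∈ S \ {t}`, as their XORs into bit `t` add up.
-/

open Matrix

noncomputable section

/-- The single-qubit Z-phase gate `D_t(α)` on qubit `t`. -/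
def Dgate {n : ℕ} (t : Fin n) (α : ℝ) : NQMatrix n :=
  Matrix.diagonal fun x => Complex.exp (-Complex.I * (α / 2) * (-1 : ℂ) ^ (bitv (x t)))

/-- The phase gadget `P_S(α)` on the subset `S`. -/
def PhaseGadget {n : ℕ} (S : Finset (Fin n)) (α : ℝ) : NQMatrix n :=
  Matrix.diagonal fun x =>
    Complex.exp (-Complex.I * (α / 2) * (-1 : ℂ) ^ (∑ i ∈ S, bitv (x i)))

/-- The fan-in gate: the product of the (pairwise commuting) gates `CNOT_{i,t}`
over all `i ∈ S \ {t}`. -/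
def fanIn {n : ℕ} (S : Finset (Fin n)) (t : Fin n) : NQMatrix n :=
  (((S.erase t).sort (· ≤ ·)).map fun c => CNOT c t).prod

open Function

section

variable {n : ℕ}

lemma one_apply_bIdx (a b : Bool) :
    (1 : Matrix (Fin 2) (Fin 2) ℂ) (bIdx a) (bIdx b) = if a = b then 1 else 0 := by
  cases a <;> cases b <;> simp [bIdx]

lemma gate1_apply (A : Matrix (Fin 2) (Fin 2) ℂ) (t : Fin n) (x y : Fin n → Bool) :
    gate1 A t x y = if ∀ j ≠ t, x j = y j then A (bIdx (x t)) (bIdx (y t)) else 0 := by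
  rw [gate1, kron, of_apply, ← Finset.mul_prod_erase _ _ (Finset.mem_univ t), if_pos rfl]
  have h_off (j) (hj : j ∈ Finset.univ.erase t) :
      (if j = t then A else 1) (bIdx (x j)) (bIdx (y j)) = if x j = y j then 1 else 0 := by
    rw [if_neg (Finset.ne_of_mem_erase hj), one_apply_bIdx]
  have h_agree : (∀ j ∈ Finset.univ.erase t, x j = y j) ↔ ∀ j ≠ t, x j = y j := by simp
  rw [Finset.prod_congr rfl h_off, Finset.prod_boole]
  simp only [h_agree, mul_ite, mul_one, mul_zero]

lemma commute_gate1_diagonal (A : Matrix (Fin 2) (Fin 2) ℂ) (t : Fin n)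
    {d : (Fin n → Bool) → ℂ} (hd : ∀ x b, d (update x t b) = d x) :
    Commute (gate1 A t) (diagonal d) := by
  ext x y
  rw [mul_diagonal, diagonal_mul, gate1_apply]
  split_ifs with hxy
  · have hdy : d y = d x := by
      rw [eq_update_iff.mpr ⟨rfl, fun j hj => (hxy j hj).symm⟩, hd]
    rw [hdy, mul_comm]
  · rw [zero_mul, mul_zero]

lemma gate1_mul_diagonal_mul_gate1_apply (A B : Matrix (Fin 2) (Fin 2) ℂ) (t : Fin n)
    (d : (Fin n → Bool) → ℂ) (x y : Fin n → Bool) :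
    (gate1 A t * diagonal d * gate1 B t) x y =
      if ∀ j ≠ t, x j = y j then
        ∑ b : Bool, A (bIdx (x t)) (bIdx b) * d (update x t b) * B (bIdx b) (bIdx (y t))
      else 0 := by
  rw [mul_apply]
  simp only [mul_diagonal]
  split_ifs with hxy
  · have hne : update x t true ≠ update x t false := fun h => by simpa using congrFun h t
    have h_off (z : Fin n → Bool) (hz : z ≠ update x t true ∧ z ≠ update x t false) :
        ¬ ∀ j ≠ t, x j = z j := fun hxz => by
      cases hzt : z t
      · exact hz.2 (eq_update_iff.mpr ⟨hzt, fun j hj => (hxz j hj).symm⟩)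
      · exact hz.1 (eq_update_iff.mpr ⟨hzt, fun j hj => (hxz j hj).symm⟩)
    rw [Fintype.sum_bool, Fintype.sum_eq_add _ _ hne fun z hz => by
      rw [gate1_apply, if_neg (h_off z hz), zero_mul, zero_mul]]
    have h_on (b : Bool) : (∀ j ≠ t, x j = update x t b j) ∧ ∀ j ≠ t, update x t b j = y j :=
      ⟨fun j hj => (update_of_ne hj _ _).symm, fun j hj => (update_of_ne hj _ _).trans (hxy j hj)⟩
    simp only [gate1_apply, if_pos (h_on _).1, if_pos (h_on _).2, update_self]
  · refine Finset.sum_eq_zero fun z _ => ?_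
    by_cases hxz : ∀ j ≠ t, x j = z j
    · rw [gate1_apply B, if_neg fun hzy => hxy fun j hj => (hxz j hj).trans (hzy j hj), mul_zero]
    · rw [gate1_apply A, if_neg hxz, zero_mul, zero_mul]

lemma HMat_apply (a b : Bool) :
    HMat (bIdx a) (bIdx b) = ((√2)⁻¹ : ℝ) * (-1 : ℂ) ^ (bitv a * bitv b) := by
  cases a <;> cases b <;> simp [HMat, bIdx, bitv, Complex.real_smul]

lemma sum_HMat_mul_phase_mul_HMat (a p c : Bool) :
    ∑ b : Bool, HMat (bIdx a) (bIdx b) * (-1) ^ (bitv b * bitv p) * HMat (bIdx b) (bIdx c) =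
      if c = xor a p then 1 else 0 := by
  have hs : ((√2 : ℝ) : ℂ)⁻¹ * ((√2 : ℝ) : ℂ)⁻¹ = 1 / 2 := by
    rw [← mul_inv, ← Complex.ofReal_mul, Real.mul_self_sqrt zero_le_two]; norm_num
  cases a <;> cases p <;> cases c <;> simp [HMat_apply, bitv] <;> linear_combination 2 * hs

def xorGate (t : Fin n) (p : (Fin n → Bool) → Bool) : NQMatrix n :=
  Matrix.of fun x y => if y = update x t (xor (x t) (p x)) then 1 else 0

lemma gate1_HMat_mul_diagonal_mul_gate1_HMat (t : Fin n) {p : (Fin n → Bool) → Bool}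
    (hp : ∀ x b, p (update x t b) = p x) :
    gate1 HMat t * diagonal (fun x => (-1 : ℂ) ^ (bitv (x t) * bitv (p x))) * gate1 HMat t =
      xorGate t p := by
  ext x y
  rw [gate1_mul_diagonal_mul_gate1_apply, xorGate, of_apply]
  simp only [eq_update_iff, update_self, hp, sum_HMat_mul_phase_mul_HMat]
  rw [← ite_and]
  exact if_congr ⟨fun ⟨hxy, hyt⟩ => ⟨hyt, fun j hj => (hxy j hj).symm⟩,
    fun ⟨hyt, hyx⟩ => ⟨fun j hj => (hyx j hj).symm, hyt⟩⟩ rfl rfl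

lemma xorGate_false (t : Fin n) : xorGate t (fun _ => false) = 1 := by
  ext x y
  simp only [xorGate, of_apply, Bool.xor_false, update_eq_self, one_apply, eq_comm]

lemma xorGate_mul_xorGate (t : Fin n) (p : (Fin n → Bool) → Bool) {q : (Fin n → Bool) → Bool}
    (hq : ∀ x b, q (update x t b) = q x) :
    xorGate t p * xorGate t q = xorGate t fun x => xor (p x) (q x) := by
  ext x y
  simp only [xorGate, mul_apply, of_apply, ite_mul, one_mul, zero_mul, Finset.sum_ite_eq',
    Finset.mem_univ, if_true, update_self, hq, update_idem, Bool.xor_assoc]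

lemma CNOT_eq_xorGate (c t : Fin n) : CNOT c t = xorGate t fun x => x c := rfl

lemma bodd_bitv (b : Bool) : Nat.bodd (bitv b) = b := by cases b <;> rfl

lemma list_prod_map_CNOT (t : Fin n) {l : List (Fin n)} (hl : t ∉ l) :
    (l.map fun c => CNOT c t).prod =
      xorGate t fun x => Nat.bodd (l.map fun c => bitv (x c)).sum := by
  induction l with
  | nil =>
    simp only [List.map_nil, List.prod_nil, List.sum_nil, Nat.bodd_zero]
    exact (xorGate_false t).symm
  | cons c l ih =>
    rw [List.mem_cons, not_or] at hl
    have h_indep (x : Fin n → Bool) (b : Bool) :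
        (l.map fun c => bitv (update x t b c)).sum = (l.map fun c => bitv (x c)).sum :=
      congrArg List.sum (List.map_congr_left fun d hd =>
        congrArg bitv (update_of_ne (ne_of_mem_of_not_mem hd hl.2) _ _))
    rw [List.map_cons, List.prod_cons, ih hl.2, CNOT_eq_xorGate,
      xorGate_mul_xorGate _ _ fun x b => by rw [h_indep]]
    simp only [List.map_cons, List.sum_cons, Nat.bodd_add, bodd_bitv]

def parity (S : Finset (Fin n)) (x : Fin n → Bool) : Bool := Nat.bodd (∑ i ∈ S, bitv (x i))

lemma fanIn_eq_xorGate (S : Finset (Fin n)) (t : Fin n) :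
    fanIn S t = xorGate t (parity (S.erase t)) := by
  have ht : t ∉ (S.erase t).sort (· ≤ ·) := fun h =>
    Finset.notMem_erase t S ((S.erase t).mem_sort _ |>.mp h)
  rw [fanIn, list_prod_map_CNOT t ht]
  congr 1
  funext x
  rw [parity, ← Finset.sum_map_toList]
  exact congrArg Nat.bodd (((S.erase t).sort_perm_toList _).map _).sum_eq

def czExponent (S : Finset (Fin n)) (x : Fin n → Bool) : ℕ :=
  ∑ p ∈ (S ×ˢ S).filter (fun p => p.1 < p.2), bitv (x p.1) * bitv (x p.2)

lemma GCZ_eq_diagonal (S : Finset (Fin n)) :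
    GCZ S = diagonal fun x => (-1 : ℂ) ^ czExponent S x := by
  let δ := diagonalRingHom (Fin n → Bool) ℂ
  have h := Finset.map_noncommProd ((S ×ˢ S).filter fun p => p.1 < p.2)
    (fun p x => (-1 : ℂ) ^ (bitv (x p.1) * bitv (x p.2))) (fun _ _ _ _ _ => mul_comm _ _) δ
  rw [Finset.noncommProd_eq_prod] at h
  refine (h.symm : GCZ S = _).trans (congrArg diagonal (funext fun x => ?_))
  rw [Finset.prod_apply, czExponent, Finset.prod_pow_eq_pow_sum]

lemma czExponent_insert {S : Finset (Fin n)} {t : Fin n} (ht : t ∉ S) (x : Fin n → Bool) :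
    czExponent (insert t S) x = czExponent S x + bitv (x t) * ∑ i ∈ S, bitv (x i) := by
  simp only [czExponent, Finset.sum_filter, Finset.sum_product, Finset.sum_insert ht,
    lt_irrefl, if_false, zero_add, Finset.sum_add_distrib, Finset.mul_sum]
  rw [← add_assoc, ← Finset.sum_add_distrib, add_comm]
  congr 1
  refine Finset.sum_congr rfl fun i hi => ?_
  rcases (ne_of_mem_of_not_mem hi ht).lt_or_gt with h | h
  · simp [h, h.not_gt, mul_comm]
  · simp [h, h.not_gt]

lemma czExponent_update {S : Finset (Fin n)} {t : Fin n} (ht : t ∉ S) (x : Fin n → Bool)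
    (b : Bool) : czExponent S (update x t b) = czExponent S x := by
  refine Finset.sum_congr rfl fun p hp => ?_
  obtain ⟨⟨h1, h2⟩, -⟩ := Finset.mem_filter.mp hp |>.imp_left Finset.mem_product.mp
  rw [update_of_ne (ne_of_mem_of_not_mem h1 ht), update_of_ne (ne_of_mem_of_not_mem h2 ht)]

lemma neg_one_pow_mul_bodd (b : Bool) (m : ℕ) :
    (-1 : ℂ) ^ (bitv b * m) = (-1) ^ (bitv b * bitv (Nat.bodd m)) := by
  cases b
  · simp [bitv]
  · simp only [bitv, if_true, one_mul]
    rw [neg_one_pow_eq_pow_mod_two, Nat.mod_two_of_bodd]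
    cases Nat.bodd m <;> rfl

lemma parity_update {S : Finset (Fin n)} {t : Fin n} (ht : t ∉ S) (x : Fin n → Bool)
    (b : Bool) : parity S (update x t b) = parity S x :=
  congrArg Nat.bodd (Finset.sum_congr rfl fun _ hi =>
    congrArg bitv (update_of_ne (ne_of_mem_of_not_mem hi ht) _ _))

lemma GCZ_insert {S : Finset (Fin n)} {t : Fin n} (ht : t ∉ S) :
    GCZ (insert t S) = GCZ S * diagonal fun x => (-1) ^ (bitv (x t) * bitv (parity S x)) := by
  rw [GCZ_eq_diagonal, GCZ_eq_diagonal, diagonal_mul_diagonal]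
  congr 1
  funext x
  rw [czExponent_insert ht, pow_add, parity, ← neg_one_pow_mul_bodd]

lemma commute_gate1_GCZ (A : Matrix (Fin 2) (Fin 2) ℂ) {S : Finset (Fin n)} {t : Fin n}
    (ht : t ∉ S) : Commute (gate1 A t) (GCZ S) := by
  rw [GCZ_eq_diagonal]
  exact commute_gate1_diagonal A t fun x b => by rw [czExponent_update ht]

end

theorem hadamard_conj_gcz_eq_cz_and_fan_in_general (n : ℕ) (S : Finset (Fin n))
    (t : Fin n) (ht : t ∈ S) :
    gate1 HMat t * GCZ S * gate1 HMat t = GCZ (S.erase t) * fanIn S t := by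
  have ht' : t ∉ S.erase t := Finset.notMem_erase t S
  set Z : NQMatrix n := diagonal fun x => (-1) ^ (bitv (x t) * bitv (parity (S.erase t) x))
    with hZ
  have hS : GCZ S = GCZ (S.erase t) * Z := by rw [← GCZ_insert ht', Finset.insert_erase ht]
  calc gate1 HMat t * GCZ S * gate1 HMat t
      = GCZ (S.erase t) * (gate1 HMat t * Z * gate1 HMat t) := by
        rw [hS, ← mul_assoc, (commute_gate1_GCZ HMat ht').eq]
        simp only [mul_assoc]
    _ = GCZ (S.erase t) * fanIn S t := by
        rw [hZ, gate1_HMat_mul_diagonal_mul_gate1_HMat t (parity_update ht'), fanIn_eq_xorGate]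

/-- Conjugating a global CZ gate on `S` by a Hadamard on one qubit `t ∈ S`
produces a fan-in of CNOTs into `t` together with residual CZ gates among the
other qubits of `S`. -/
theorem hadamard_conj_gcz_eq_cz_and_fan_in (n : ℕ) (hn : 1 ≤ n) (S : Finset (Fin n))
    (t : Fin n) (ht : t ∈ S) :
    gate1 HMat t * GCZ S * gate1 HMat t = GCZ (S.erase t) * fanIn S t :=
  hadamard_conj_gcz_eq_cz_and_fan_in_general n S t ht
end
end
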